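/- In Lorentz–Minkowski space E₁³, if a C² regular lightlike curve lies on a pseudo-sphere S₁²(P; r) or on a light-cone C²(P), then it is a straight line. -/

import Mathlib

/-!
Differentiating `⟨α - P, α - P⟩₁ = const` along a lightlike curve gives `⟨α - P, α'⟩₁ = 0`, and
differentiating once more `⟨α - P, α''⟩₁ = 0`; also `⟨α', α''⟩₁ = 0`. On a pseudo-sphere `α - P` is
spacelike, so the only directions orthogonal to both `α - P` and the null vector `α'` are those of
`α'`: hence `α'' ∥ α'`. On the light cone `α - P` and `α'` are orthogonal null vectors, hence
parallel; differentiating this proportionality gives `α'' ∥ α - P ∥ α'` away from the vertex, and at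
the vertex by continuity, since the curve crosses the level `P 2` of its time coordinate
transversally. Finally a nonzero null vector has nonzero time component, so `α' / α'₂` is defined,
and `α'' ∥ α'` makes it constant: `α` moves along a fixed direction.
-/

/-- The Lorentz–Minkowski inner product of index 1 on `ℝ³`. -/
noncomputable def mdot (x y : Fin 3 → ℝ) : ℝ := x 0 * y 0 + x 1 * y 1 - x 2 * y 2

open Filter Topology

section ParallelAcceleration

variable {E : Type*} [NormedAddCommGroup E] [NormedSpace ℝ E]

/- For `ℓ γ ≠ 0`, `ℓ γ • γ' = ℓ γ' • γ` says that `γ'` is parallel to `γ`; unlike `∃ c, γ' = c • γ`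
it is a closed condition. -/
theorem inv_smul_eq_of_smul_deriv_eq (ℓ : E →L[ℝ] ℝ) {γ γ' : ℝ → E}
    (hγ : ∀ s, HasDerivAt γ (γ' s) s) (hℓ : ∀ s, ℓ (γ s) ≠ 0)
    (hpar : ∀ s, ℓ (γ s) • γ' s = ℓ (γ' s) • γ s) (s t : ℝ) :
    (ℓ (γ s))⁻¹ • γ s = (ℓ (γ t))⁻¹ • γ t := by
  have hu : ∀ s, HasDerivAt (fun s => (ℓ (γ s))⁻¹ • γ s) 0 s := by
    intro s
    refine (((ℓ.hasFDerivAt.comp_hasDerivAt s (hγ s)).inv (hℓ s)).smul (hγ s)).congr_deriv ?_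
    have h := hℓ s
    calc _ = (ℓ (γ s) ^ 2)⁻¹ • (ℓ (γ s) • γ' s - ℓ (γ' s) • γ s) := by
          simp only [Pi.inv_apply, Function.comp_apply]
          match_scalars <;> field_simp
      _ = 0 := by rw [hpar, sub_self, smul_zero]
  exact is_const_of_deriv_eq_zero (fun s => (hu s).differentiableAt) (fun s => (hu s).deriv) s t

theorem eq_add_smul_of_deriv_eq_smul (ℓ : E →L[ℝ] ℝ) {α γ : ℝ → E} {v : E}
    (hα : ∀ s, HasDerivAt α (γ s) s) (hv : ∀ s, γ s = ℓ (γ s) • v) (s : ℝ) :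
    α s = (α 0 - ℓ (α 0) • v) + ℓ (α s) • v := by
  have hh : ∀ s, HasDerivAt (fun s => α s - ℓ (α s) • v) 0 s := fun s => by
    refine ((hα s).sub ((ℓ.hasFDerivAt.comp_hasDerivAt s (hα s)).smul_const v)).congr_deriv ?_
    rw [← hv, sub_self]
  rw [← is_const_of_deriv_eq_zero (fun s => (hh s).differentiableAt) (fun s => (hh s).deriv) s 0]
  abel

theorem exists_line_of_smul_deriv_eq (ℓ : E →L[ℝ] ℝ) {α γ γ' : ℝ → E}
    (hα : ∀ s, HasDerivAt α (γ s) s) (hγ : ∀ s, HasDerivAt γ (γ' s) s) (hℓ : ∀ s, ℓ (γ s) ≠ 0)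
    (hpar : ∀ s, ℓ (γ s) • γ' s = ℓ (γ' s) • γ s) :
    ∃ (α₀ v : E) (f : ℝ → ℝ), ∀ s, α s = α₀ + f s • v :=
  ⟨_, (ℓ (γ 0))⁻¹ • γ 0, fun s => ℓ (α s), eq_add_smul_of_deriv_eq_smul ℓ hα fun s => by
    rw [← inv_smul_eq_of_smul_deriv_eq ℓ hγ hℓ hpar s 0, smul_inv_smul₀ (hℓ s)]⟩

end ParallelAcceleration

theorem mdot_comm (x y : Fin 3 → ℝ) : mdot x y = mdot y x := by
  unfold mdot; ring

theorem HasDerivAt.mdot {f g : ℝ → Fin 3 → ℝ} {f' g' : Fin 3 → ℝ} {s : ℝ}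
    (hf : HasDerivAt f f' s) (hg : HasDerivAt g g' s) :
    HasDerivAt (fun t => mdot (f t) (g t)) (mdot f' (g s) + mdot (f s) g') s := by
  have hfi := hasDerivAt_pi.1 hf
  have hgi := hasDerivAt_pi.1 hg
  refine ((((hfi 0).mul (hgi 0)).add ((hfi 1).mul (hgi 1))).sub
    ((hfi 2).mul (hgi 2))).congr_deriv ?_
  unfold _root_.mdot; ring

section DerivMdot

variable {f g f' g' : ℝ → Fin 3 → ℝ} {c : ℝ}

theorem mdot_deriv_add_mdot_deriv_eq_zero (hf : ∀ s, HasDerivAt f (f' s) s)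
    (hg : ∀ s, HasDerivAt g (g' s) s) (h : ∀ s, mdot (f s) (g s) = c) (s : ℝ) :
    mdot (f' s) (g s) + mdot (f s) (g' s) = 0 := by
  have hc : HasDerivAt (fun t => mdot (f t) (g t)) 0 s := by
    simpa only [h] using hasDerivAt_const s c
  exact ((hf s).mdot (hg s)).unique hc

theorem mdot_deriv_eq_zero_of_mdot_self_eq (hf : ∀ s, HasDerivAt f (f' s) s)
    (h : ∀ s, mdot (f s) (f s) = c) (s : ℝ) : mdot (f s) (f' s) = 0 := by
  have := mdot_deriv_add_mdot_deriv_eq_zero hf hf h s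
  rw [mdot_comm] at this
  linarith

end DerivMdot

theorem apply_two_ne_zero_of_mdot_self_eq_zero {v : Fin 3 → ℝ} (hv : mdot v v = 0) (hne : v ≠ 0) :
    v 2 ≠ 0 := by
  intro h2
  apply hne
  unfold mdot at hv
  have h0 : v 0 = 0 := by nlinarith
  have h1 : v 1 = 0 := by nlinarith
  funext i
  fin_cases i <;> assumption

theorem smul_eq_smul_of_mdot_self_ne_zero {x v w : Fin 3 → ℝ} (hx : mdot x x ≠ 0)
    (hv : mdot v v = 0) (hxv : mdot x v = 0) (hxw : mdot x w = 0) (hvw : mdot v w = 0) :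
    v 2 • w = w 2 • v := by
  by_cases hv2 : v 2 = 0
  · obtain rfl : v = 0 := by_contra fun hne => apply_two_ne_zero_of_mdot_self_eq_zero hv hne hv2
    simp
  have hD : (x 0 * v 1 - x 1 * v 0) ^ 2 = mdot x x * v 2 ^ 2 := by
    unfold mdot at *
    linear_combination (x 0 ^ 2 + x 1 ^ 2) * hv - (x 0 * v 0 + x 1 * v 1 + x 2 * v 2) * hxv
  have hD0 : x 0 * v 1 - x 1 * v 0 ≠ 0 := fun h => by
    simp [h, hx, hv2] at hD
  unfold mdot at *
  funext i
  fin_cases i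
  · show v 2 * w 0 = w 2 * v 0
    refine mul_right_cancel₀ hD0 ?_
    linear_combination v 1 * (v 2 * hxw - w 2 * hxv) - x 1 * (v 2 * hvw - w 2 * hv)
  · show v 2 * w 1 = w 2 * v 1
    refine mul_right_cancel₀ hD0 ?_
    linear_combination -(v 0 * (v 2 * hxw - w 2 * hxv) - x 0 * (v 2 * hvw - w 2 * hv))
  · exact mul_comm _ _

theorem smul_eq_smul_of_mdot_eq_zero {x v : Fin 3 → ℝ} (hx : mdot x x = 0) (hv : mdot v v = 0)
    (hxv : mdot x v = 0) : x 2 • v = v 2 • x := by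
  unfold mdot at *
  have hsq : (x 0 * v 2 - x 2 * v 0) ^ 2 + (x 1 * v 2 - x 2 * v 1) ^ 2 = 0 := by
    linear_combination v 2 ^ 2 * hx + x 2 ^ 2 * hv - 2 * x 2 * v 2 * hxv
  obtain ⟨h0, h1⟩ := (add_eq_zero_iff_of_nonneg (sq_nonneg _) (sq_nonneg _)).1 hsq
  rw [sq_eq_zero_iff, sub_eq_zero] at h0 h1
  funext i
  fin_cases i
  · show x 2 * v 0 = v 2 * x 0
    linarith
  · show x 2 * v 1 = v 2 * x 1
    linarith
  · exact mul_comm _ _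

theorem eq_of_forall_ne_of_hasDerivAt_ne_zero {X : Type*} [TopologicalSpace X] [T2Space X]
    {F G : ℝ → X} (hF : Continuous F) (hG : Continuous G) {g g' : ℝ → ℝ}
    (hg : ∀ s, HasDerivAt g (g' s) s) (hg' : ∀ s, g' s ≠ 0) {c : ℝ}
    (h : ∀ s, g s ≠ c → F s = G s) (s : ℝ) : F s = G s := by
  have hne : F =ᶠ[𝓝[≠] s] G := ((hg s).eventually_ne (hg' s)).mono h
  exact ((hF.continuousAt.eventuallyEq_nhds_iff_eventuallyEq_nhdsNE hG.continuousAt).1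
    hne).eq_of_nhds

section LightlikeCurve

variable {α γ γ' : ℝ → Fin 3 → ℝ} {P : Fin 3 → ℝ}

theorem smul_eq_smul_of_mdot_sub_self_eq (hα : ∀ s, HasDerivAt α (γ s) s)
    (hγ : ∀ s, HasDerivAt γ (γ' s) s) (hlight : ∀ s, mdot (γ s) (γ s) = 0) {K : ℝ} (hK : K ≠ 0)
    (hS : ∀ s, mdot (α s - P) (α s - P) = K) (s : ℝ) : γ s 2 • γ' s = γ' s 2 • γ s := by
  have hαP : ∀ s, HasDerivAt (fun t => α t - P) (γ s) s := fun s => (hα s).sub_const P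
  have hxv := mdot_deriv_eq_zero_of_mdot_self_eq hαP hS
  have hxw := mdot_deriv_add_mdot_deriv_eq_zero hαP hγ hxv s
  rw [hlight, zero_add] at hxw
  exact smul_eq_smul_of_mdot_self_ne_zero (hS s ▸ hK) (hlight s) (hxv s) hxw
    (mdot_deriv_eq_zero_of_mdot_self_eq hγ hlight s)

theorem smul_eq_smul_of_mdot_sub_self_eq_zero (hα : ∀ s, HasDerivAt α (γ s) s)
    (hγ : ∀ s, HasDerivAt γ (γ' s) s) (hlight : ∀ s, mdot (γ s) (γ s) = 0)
    (hγ'c : Continuous γ') (h2 : ∀ s, γ s 2 ≠ 0)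
    (hS : ∀ s, mdot (α s - P) (α s - P) = 0) (s : ℝ) : γ s 2 • γ' s = γ' s 2 • γ s := by
  have hαP : ∀ s, HasDerivAt (fun t => α t - P) (γ s) s := fun s => (hα s).sub_const P
  have hαP2 : ∀ s, HasDerivAt (fun t => (α t - P) 2) (γ s 2) s := fun s => hasDerivAt_pi.1 (hαP s) 2
  have hγ2 : ∀ s, HasDerivAt (fun t => γ t 2) (γ' s 2) s := fun s => hasDerivAt_pi.1 (hγ s) 2
  have hxv : ∀ s, (α s - P) 2 • γ s = γ s 2 • (α s - P) := fun s =>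
    smul_eq_smul_of_mdot_eq_zero (hS s) (hlight s) (mdot_deriv_eq_zero_of_mdot_self_eq hαP hS s)
  have hxw : ∀ s, (α s - P) 2 • γ' s = γ' s 2 • (α s - P) := fun s => by
    have h := ((hαP2 s).smul (hγ s)).unique
      (((hγ2 s).smul (hαP s)).congr_of_eventuallyEq (Eventually.of_forall hxv))
    rwa [add_comm, add_left_cancel_iff] at h
  have hγc : Continuous γ := continuous_iff_continuousAt.2 fun s => (hγ s).continuousAt
  refine eq_of_forall_ne_of_hasDerivAt_ne_zero (F := fun s => γ s 2 • γ' s)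
    (G := fun s => γ' s 2 • γ s) (by fun_prop) (by fun_prop) hαP2 h2 (c := 0)
    (fun s hs => smul_right_injective _ hs ?_) s
  calc (α s - P) 2 • γ s 2 • γ' s = γ s 2 • γ' s 2 • (α s - P) := by rw [smul_comm, hxw]
    _ = (α s - P) 2 • γ' s 2 • γ s := by rw [smul_comm, ← hxv, smul_comm]

end LightlikeCurve

/-- In `E₁³`, a `C²` regular lightlike curve lying on a pseudo-sphere `S₁²(P;r)` or
a light-cone `C²(P)` is a straight line. -/
theorem stmt11 (α : ℝ → Fin 3 → ℝ)
    (hα : ContDiff ℝ 2 α)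
    (hreg : ∀ s, deriv α s ≠ 0)
    (hlight : ∀ s, mdot (deriv α s) (deriv α s) = 0)
    (hsph : (∃ (P : Fin 3 → ℝ) (r : ℝ), 0 < r ∧ ∀ s, mdot (α s - P) (α s - P) = r ^ 2) ∨
            (∃ P : Fin 3 → ℝ, ∀ s, mdot (α s - P) (α s - P) = 0)) :
    ∃ (α₀ v : Fin 3 → ℝ) (f : ℝ → ℝ), ∀ s, α s = α₀ + f s • v := by
  have hγ : ContDiff ℝ 1 (deriv α) := ((contDiff_succ_iff_deriv (n := 1)).1 hα).2.2
  have hα' : ∀ s, HasDerivAt α (deriv α s) s := fun s =>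
    (hα.differentiable (by norm_num) s).hasDerivAt
  have hγ' : ∀ s, HasDerivAt (deriv α) (deriv (deriv α) s) s := fun s =>
    (hγ.differentiable one_ne_zero s).hasDerivAt
  have h2 : ∀ s, deriv α s 2 ≠ 0 := fun s =>
    apply_two_ne_zero_of_mdot_self_eq_zero (hlight s) (hreg s)
  refine exists_line_of_smul_deriv_eq (ContinuousLinearMap.proj 2) hα' hγ' h2 fun s => ?_
  rcases hsph with ⟨P, r, hr, hS⟩ | ⟨P, hS⟩
  · exact smul_eq_smul_of_mdot_sub_self_eq hα' hγ' hlight (pow_ne_zero 2 hr.ne') hS s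
  · exact smul_eq_smul_of_mdot_sub_self_eq_zero hα' hγ' hlight (hγ.continuous_deriv le_rfl) h2 hS s
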